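/- Let Ξ be a finite set, Π : Ξ × Ξ → {0,1}, λ > 0, and h = (h_j)_{j∈Ξ} a vector with h_j > 0; set p_{ij} = Π_{ij} h_j / (λ h_i). Let ι : Ξ → Ξ be an involution and Ξ_S, Ξ_F ⊆ Ξ subsets with ι(Ξ_S) = Ξ_F. Let G be a group acting on a probability space (X,μ) by invertible measure-preserving transformations with Koopman operators T_g, and let γ, ω : Ξ → G. Define, on tuples φ = (φ_j)_{j∈Ξ} of functions on X, the operators (Pφ)_i = Σ_j p_{ij} T_{γ(i)}^{−1} φ_j and (Uφ)_j = T_{ω(j)}^{−1} φ_{ι(j)}; and for f ∈ L¹(X,μ) let φ^{(f)} be the tuple with φ^{(f)}_j = (1/h_{ι(j)}) f if j ∈ Ξ_S and φ^{(f)}_j = 0 otherwise. Then for every n ≥ 1 and every f ∈ L¹(X,μ): Σ T_{ω(i_{n−1}) γ(i_{n−2}) ⋯ γ(i₁) γ(i₀)}^{−1} f = λ^{n−1} Σ_{j∈Ξ_S} h_j (P^{n−1} U φ^{(f)})_j, where the left-hand sum ranges over all sequences (i₀, …, i_{n−1}) ∈ Ξ^n with i₀ ∈ Ξ_S, i_{n−1}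 ∈ Ξ_F and Π_{i_s i_{s+1}} = 1 for all 0 ≤ s ≤ n−2. -/

import Mathlib

/-!
Since the Koopman operators form a representation of `G`, expanding `P^{n-1}` along paths
writes `(P^{n-1} ψ)_{i₀}` as the sum over paths `i₀ → ⋯ → i_{n-1}` of the weight
`p_{i₀i₁} ⋯ p_{i_{n-2}i_{n-1}}` times `T_{γ(i_{n-2}) ⋯ γ(i₀)}⁻¹ ψ_{i_{n-1}}`. The weight is a
Doob `h`-transform of the 0–1 matrix `Π`, so it telescopes to `λ^{-(n-1)} h_{i_{n-1}} / h_{i₀}`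
times the indicator that the path is admissible; and `(U φ^{(f)})_{i_{n-1}}` vanishes unless
`i_{n-1} ∈ Ξ_F`, where it is `h_{i_{n-1}}⁻¹ T_{ω(i_{n-1})}⁻¹ f`. The factors `λ^{n-1} h_{i₀}`
then cancel term by term.
-/

open MeasureTheory Filter

noncomputable section

/-- The Markov operator `(Pφ)_i = Σ_j p_{ij} T_{γ(i)}⁻¹ φ_j` on tuples `(φ_j)_{j∈Ξ}` of
`L¹(X,μ)`-functions. -/
def PopL1 {Ξ : Type*} [Fintype Ξ] {X : Type*} [MeasurableSpace X] {G : Type*} [Group G]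
    (μ : Measure X) (p' : Ξ → Ξ → ℝ) (T : G → Lp ℝ 1 μ →L[ℝ] Lp ℝ 1 μ) (γ : Ξ → G)
    (φ : Ξ → Lp ℝ 1 μ) : Ξ → Lp ℝ 1 μ :=
  fun i => ∑ j, p' i j • T (γ i)⁻¹ (φ j)

/-- The operator `(Uφ)_j = T_{ω(j)}⁻¹ φ_{ι(j)}` on tuples of `L¹(X,μ)`-functions. -/
def UopL1 {Ξ : Type*} {X : Type*} [MeasurableSpace X] {G : Type*} [Group G]
    (μ : Measure X) (T : G → Lp ℝ 1 μ →L[ℝ] Lp ℝ 1 μ) (ι : Ξ → Ξ) (ω : Ξ → G)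
    (φ : Ξ → Lp ℝ 1 μ) : Ξ → Lp ℝ 1 μ :=
  fun j => T (ω j)⁻¹ (φ (ι j))

section Koopman

variable {X G E : Type*} [MeasurableSpace X] [Group G] [NormedAddCommGroup E] {p : ENNReal}
  {μ : Measure X} {S : G → X → X} {T : G → Lp E p μ → Lp E p μ}

theorem koopman_one (hS1 : S 1 = id)
    (hT : ∀ g (f : Lp E p μ), (T g f : X → E) =ᵐ[μ] fun x => f (S g⁻¹ x)) (f : Lp E p μ) :
    T 1 f = f :=
  Lp.ext <| (hT 1 f).trans <| by simp [hS1]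

theorem koopman_mul (hS : ∀ g, MeasurePreserving (S g) μ μ)
    (hSm : ∀ g g', S (g * g') = S g ∘ S g')
    (hT : ∀ g (f : Lp E p μ), (T g f : X → E) =ᵐ[μ] fun x => f (S g⁻¹ x))
    (g g' : G) (f : Lp E p μ) : T g (T g' f) = T (g * g') f := by
  refine Lp.ext <| (hT g _).trans <| .trans ?_ (hT (g * g') f).symm
  have hcomp : (fun x => (f : X → E) (S g'⁻¹ x)) ∘ S g⁻¹ = fun x => f (S (g * g')⁻¹ x) := by
    rw [mul_inv_rev, hSm]; rfl
  exact hcomp ▸ (hS g⁻¹).quasiMeasurePreserving.ae_eq_comp (hT g' f)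

end Koopman

section Paths

variable {Ξ : Type*} {n : ℕ}

def pathWeight {R : Type*} [CommMonoid R] (q : Ξ → Ξ → R) (i : Fin (n + 1) → Ξ) : R :=
  ∏ s : Fin n, q (i s.castSucc) (i s.succ)

def pathWord {G : Type*} [Monoid G] (γ : Ξ → G) (i : Fin (n + 1) → Ξ) : G :=
  ((List.ofFn fun s : Fin n => γ (i s.castSucc)).reverse).prod

theorem pathWeight_cons {R : Type*} [CommMonoid R] (q : Ξ → Ξ → R) (a : Ξ)
    (i : Fin (n + 1) → Ξ) : pathWeight q (Fin.cons a i) = q a (i 0) * pathWeight q i := by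
  simp [pathWeight, Fin.prod_univ_succ]

theorem pathWord_cons {G : Type*} [Monoid G] (γ : Ξ → G) (a : Ξ) (i : Fin (n + 1) → Ξ) :
    pathWord γ (Fin.cons a i) = pathWord γ i * γ a := by
  simp [pathWord, List.ofFn_succ]

theorem pathWeight_eq_ite {R : Type*} [CommMonoidWithZero R] [DecidableEq R]
    {q : Ξ → Ξ → R} (hq : ∀ a b, q a b = 0 ∨ q a b = 1) (i : Fin (n + 1) → Ξ) :
    pathWeight q i = if ∀ s : Fin n, q (i s.castSucc) (i s.succ) = 1 then 1 else 0 := by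
  split_ifs with hall
  · exact Finset.prod_eq_one fun s _ => hall s
  · obtain ⟨s, hs⟩ := not_forall.1 hall
    exact Finset.prod_eq_zero (Finset.mem_univ s) ((hq _ _).resolve_right hs)

theorem pathWeight_ratio {K : Type*} [Field K] (q : Ξ → Ξ → K) (c : K) {h : Ξ → K}
    (hh : ∀ a, h a ≠ 0) (i : Fin (n + 1) → Ξ) :
    pathWeight (fun a b => q a b * h b / (c * h a)) i
      = pathWeight q i * h (i (Fin.last n)) / (c ^ n * h (i 0)) := by
  induction n with
  | zero => simp [pathWeight, hh, Fin.last]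
  | succ n ih =>
    cases i using Fin.consCases with
    | cons a i =>
      rw [pathWeight_cons, ih, pathWeight_cons, Fin.cons_zero, ← Fin.succ_last, Fin.cons_succ]
      by_cases hc : c = 0
      · simp [hc]
      field_simp [hh]
      ring

end Paths

theorem Fin.sum_ite_apply_zero_eq_sum_cons {α M : Type*} [Fintype α] [DecidableEq α] [AddCommMonoid M]
    {n : ℕ} (a : α) (F : (Fin (n + 1) → α) → M) :
    ∑ i : Fin (n + 1) → α, (if i 0 = a then F i else 0) = ∑ i : Fin n → α, F (Fin.cons a i) := by
  rw [← (Fin.consEquiv fun _ => α).sum_comp, Fintype.sum_prod_type, Finset.sum_comm]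
  simp [Fin.consEquiv]

section Operators

variable {Ξ X G : Type*} [MeasurableSpace X] [Group G] {μ : Measure X}
  {T : G → Lp ℝ 1 μ →L[ℝ] Lp ℝ 1 μ}

theorem iterate_PopL1_apply [Fintype Ξ] [DecidableEq Ξ] (hT1 : ∀ f, T 1 f = f)
    (hTmul : ∀ g g' f, T g (T g' f) = T (g * g') f) (p' : Ξ → Ξ → ℝ) (γ : Ξ → G) (n : ℕ)
    (ψ : Ξ → Lp ℝ 1 μ) (j₀ : Ξ) :
    (PopL1 μ p' T γ)^[n] ψ j₀ = ∑ i : Fin (n + 1) → Ξ,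
      if i 0 = j₀ then pathWeight p' i • T (pathWord γ i)⁻¹ (ψ (i (Fin.last n))) else 0 := by
  induction n generalizing j₀ with
  | zero => simp [Fin.sum_ite_apply_zero_eq_sum_cons, pathWeight, pathWord, hT1, Fin.last]
  | succ n ih =>
    rw [Function.iterate_succ_apply', Fin.sum_ite_apply_zero_eq_sum_cons]
    simp only [PopL1, ih, map_sum, Finset.smul_sum]
    rw [Finset.sum_comm]
    refine Finset.sum_congr rfl fun i _ => ?_
    simp only [apply_ite (T (γ j₀)⁻¹), map_zero, smul_ite, smul_zero, Finset.sum_ite_eq,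
      Finset.mem_univ, if_true]
    rw [pathWeight_cons, pathWord_cons, ← Fin.succ_last, Fin.cons_succ, mul_inv_rev, ← hTmul,
      map_smul, smul_smul]

theorem UopL1_seed_apply [DecidableEq Ξ] {ι : Ξ → Ξ} (hι : ∀ j, ι (ι j) = j)
    {ΞS ΞF : Finset Ξ} (hSF : ΞS.image ι = ΞF) (h : Ξ → ℝ) (ω : Ξ → G) (f : Lp ℝ 1 μ) (j : Ξ) :
    UopL1 μ T ι ω (fun j' => if j' ∈ ΞS then (h (ι j'))⁻¹ • f else 0) j
      = if j ∈ ΞF then (h j)⁻¹ • T (ω j)⁻¹ f else 0 := by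
  have hmem : j ∈ ΞF ↔ ι j ∈ ΞS := by
    rw [← hSF, Finset.mem_image]
    exact ⟨fun ⟨a, ha, hj⟩ => hj ▸ (hι a).symm ▸ ha, fun hj => ⟨ι j, hj, hι j⟩⟩
  simp only [UopL1, hmem, hι, apply_ite (T (ω j)⁻¹), map_zero, map_smul]

end Operators

open scoped Classical in
theorem statement12_general
    {Ξ : Type*} [Fintype Ξ] [DecidableEq Ξ] {X : Type*} [MeasurableSpace X] {G : Type*} [Group G]
    (μ : Measure X)
    -- the 0–1 transition matrix, the PF eigenvalue and eigenvector
    (M : Ξ → Ξ → ℝ) (hM : ∀ i j, M i j = 0 ∨ M i j = 1)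
    (lam : ℝ) (hlam : 0 < lam)
    (h : Ξ → ℝ) (hh : ∀ j, 0 < h j)
    -- the involution and the sets of start and final states
    (ι : Ξ → Ξ) (hι : ∀ j, ι (ι j) = j)
    (ΞS ΞF : Finset Ξ) (hSF : ΞS.image ι = ΞF)
    -- the measure-preserving action of G on (X,μ) by invertible transformations
    (S : G → X → X) (hS : ∀ g, MeasurePreserving (S g) μ μ)
    (hS1 : S 1 = id) (hSm : ∀ g g', S (g * g') = S g ∘ S g')
    -- the Koopman operators T_g f = f ∘ S g⁻¹ on L¹(X,μ)
    (T : G → Lp ℝ 1 μ →L[ℝ] Lp ℝ 1 μ)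
    (hT : ∀ g (f : Lp ℝ 1 μ), (T g f : X → ℝ) =ᵐ[μ] fun x => f (S g⁻¹ x))
    (γ ω : Ξ → G)
    (m : ℕ) (f : Lp ℝ 1 μ) :
    (∑ i : Fin (m + 1) → Ξ,
      if i 0 ∈ ΞS ∧ i (Fin.last m) ∈ ΞF ∧
          (∀ s : Fin m, M (i s.castSucc) (i s.succ) = 1) then
        T (ω (i (Fin.last m)) *
            ((List.ofFn fun s : Fin m => γ (i s.castSucc)).reverse).prod)⁻¹ f
      else 0)
    = lam ^ m •
      ∑ j ∈ ΞS, h j •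
        (PopL1 μ (fun i' j' => M i' j' * h j' / (lam * h i')) T γ)^[m]
          (UopL1 μ T ι ω fun j' => if j' ∈ ΞS then (h (ι j'))⁻¹ • f else 0) j := by
  have hT1 := koopman_one (T := fun g => ⇑(T g)) hS1 hT
  have hTmul := koopman_mul (T := fun g => ⇑(T g)) hS hSm hT
  simp only [iterate_PopL1_apply hT1 hTmul, UopL1_seed_apply hι hSF, Finset.smul_sum, smul_ite,
    smul_zero, smul_smul]
  rw [Finset.sum_comm]
  refine Finset.sum_congr rfl fun i _ => ?_
  rw [Finset.sum_ite_eq]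
  have hweight : lam ^ m * (h (i 0) * pathWeight (fun a b => M a b * h b / (lam * h a)) i)
      * (h (i (Fin.last m)))⁻¹ = pathWeight M i := by
    rw [pathWeight_ratio M lam fun j => (hh j).ne']
    field_simp [(hh (i 0)).ne', (hh (i (Fin.last m))).ne', hlam.ne']
  rw [pathWeight_eq_ite hM] at hweight
  by_cases hstart : i 0 ∈ ΞS
  · by_cases hend : i (Fin.last m) ∈ ΞF
    · simp only [hstart, hend, true_and, if_true, map_smul, smul_smul, hTmul, ← mul_inv_rev,
        hweight, pathWord]
      split_ifs <;> simp
    · simp [hend]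
  · simp [hstart]

open scoped Classical in
/-- The spherical sum `Σ T_{ω(i_{n−1})γ(i_{n−2})⋯γ(i₀)}⁻¹ f`, taken over all
admissible sequences `(i₀,…,i_{n−1})` of states starting in `Ξ_S` and ending in `Ξ_F`, equals
`λ^{n−1} Σ_{j∈Ξ_S} h_j (P^{n−1} U φ^{(f)})_j`.  (Here `n = m + 1 ≥ 1`.) -/
theorem statement12
    {Ξ : Type*} [Fintype Ξ] [DecidableEq Ξ] {X : Type*} [MeasurableSpace X] {G : Type*} [Group G]
    (μ : Measure X) [IsProbabilityMeasure μ]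
    -- the 0–1 transition matrix, the PF eigenvalue and eigenvector
    (M : Ξ → Ξ → ℝ) (hM : ∀ i j, M i j = 0 ∨ M i j = 1)
    (lam : ℝ) (hlam : 0 < lam)
    (h : Ξ → ℝ) (hh : ∀ j, 0 < h j)
    -- the involution and the sets of start and final states
    (ι : Ξ → Ξ) (hι : ∀ j, ι (ι j) = j)
    (ΞS ΞF : Finset Ξ) (hSF : ΞS.image ι = ΞF)
    -- the measure-preserving action of G on (X,μ) by invertible transformations
    (S : G → X → X) (hS : ∀ g, MeasurePreserving (S g) μ μ)
    (hS1 : S 1 = id) (hSm : ∀ g g', S (g * g') = S g ∘ S g')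
    -- the Koopman operators T_g f = f ∘ S g⁻¹ on L¹(X,μ)
    (T : G → Lp ℝ 1 μ →L[ℝ] Lp ℝ 1 μ)
    (hT : ∀ g (f : Lp ℝ 1 μ), (T g f : X → ℝ) =ᵐ[μ] fun x => f (S g⁻¹ x))
    (γ ω : Ξ → G)
    (m : ℕ) (f : Lp ℝ 1 μ) :
    (∑ i : Fin (m + 1) → Ξ,
      if i 0 ∈ ΞS ∧ i (Fin.last m) ∈ ΞF ∧
          (∀ s : Fin m, M (i s.castSucc) (i s.succ) = 1) then
        T (ω (i (Fin.last m)) *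
            ((List.ofFn fun s : Fin m => γ (i s.castSucc)).reverse).prod)⁻¹ f
      else 0)
    = lam ^ m •
      ∑ j ∈ ΞS, h j •
        (PopL1 μ (fun i' j' => M i' j' * h j' / (lam * h i')) T γ)^[m]
          (UopL1 μ T ι ω fun j' => if j' ∈ ΞS then (h (ι j'))⁻¹ • f else 0) j :=
  statement12_general μ M hM lam hlam h hh ι hι ΞS ΞF hSF S hS hS1 hSm T hT γ ω m f
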